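/- arXiv:1507.06761 — 2 statements merged into one kernel-verified Lean document; each statement's English description precedes it below -/
import Mathlib

section
/- Let G be a finite connected simple graph with m edges and let w be a quaternionic weight on its arcs. Then the quaternionic weighted zeta function has the expression Z_ℍ(G,w,t) = exp( ∑_{n≥1} ∑_C (2 Re(w(C)^n)/n) t^{n|C|} ), where C runs over all reduced Lyndon cycles of G; the double sum is a well-defined element of ℝ[[t]] ⊆ ℍ[[t]] with zero constant term (for each power of t only finitely many pairs (n,C) contribute), and exp is the formal exponential ∑_{m≥0} α^m/m!. -/
open Quaternion PowerSeries

noncomputable section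

/-- The simplex part of a quaternion: `x = x^S + j x^P` with `x^S, x^P ∈ ℂ`. -/
def qS (x : ℍ[ℝ]) : ℂ := ⟨x.re, x.imI⟩

/-- The perplex part of a quaternion. -/
def qP (x : ℍ[ℝ]) : ℂ := ⟨x.imJ, -x.imK⟩

/-- The embedding of `ℂ` into the quaternions as the real subalgebra spanned by `1, i`. -/
def cq : ℂ →+* ℍ[ℝ] where
  toFun c := ⟨c.re, c.im, 0, 0⟩
  map_one' := by ext <;> simp
  map_mul' a b := by
    show (⟨(a*b).re, (a*b).im, 0, 0⟩ : ℍ[ℝ]) = (⟨a.re, a.im, 0, 0⟩ : ℍ[ℝ]) * ⟨b.re, b.im, 0, 0⟩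
    rw [QuaternionAlgebra.mk_mul_mk]; ext <;> simp <;> ring
  map_zero' := by ext <;> simp
  map_add' a b := by
    show (⟨(a+b).re, (a+b).im, 0, 0⟩ : ℍ[ℝ]) = (⟨a.re, a.im, 0, 0⟩ : ℍ[ℝ]) + ⟨b.re, b.im, 0, 0⟩
    rw [QuaternionAlgebra.mk_add_mk]; ext <;> simp

/-- Coefficientwise quaternion conjugation of a formal power series. -/
def pStar (α : PowerSeries ℍ[ℝ]) : PowerSeries ℍ[ℝ] :=
  PowerSeries.mk fun k => star (PowerSeries.coeff k α)

/-- Coefficientwise simplex part of a quaternionic power series. -/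
def pS (α : PowerSeries ℍ[ℝ]) : PowerSeries ℂ :=
  PowerSeries.mk fun k => qS (PowerSeries.coeff k α)

/-- Coefficientwise perplex part of a quaternionic power series. -/
def pP (α : PowerSeries ℍ[ℝ]) : PowerSeries ℂ :=
  PowerSeries.mk fun k => qP (PowerSeries.coeff k α)

/-- Coefficientwise complex conjugation of a complex power series. -/
def pConj (β : PowerSeries ℂ) : PowerSeries ℂ := PowerSeries.map (starRingEnd ℂ) β

/-- `ψ_t(M) = [[M^S, −conj(M^P)], [M^P, conj(M^S)]]`. -/
def psiT {ι κ : Type*} (M : Matrix ι κ (PowerSeries ℍ[ℝ])) :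
    Matrix (ι ⊕ ι) (κ ⊕ κ) (PowerSeries ℂ) :=
  Matrix.fromBlocks (M.map pS) (-(M.map fun a => pConj (pP a)))
    (M.map pP) (M.map fun a => pConj (pS a))

/-- The Study determinant `Sdet_t(M) = det(ψ_t(M))`. -/
def SdetT {ι : Type*} [Fintype ι] [DecidableEq ι] (M : Matrix ι ι (PowerSeries ℍ[ℝ])) :
    PowerSeries ℂ :=
  (psiT M).det

/-- A Lyndon word: nonempty, not a power of a shorter word, and lexicographically minimal
among its cyclic rotations. -/
def IsLyndon {α : Type*} [LinearOrder α] (l : List α) : Prop :=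
  l ≠ [] ∧
    (¬ ∃ (v : List α) (r : ℕ), 2 ≤ r ∧ v.length < l.length ∧ l = (List.replicate r v).flatten) ∧
    ∀ i < l.length, l ≤ l.rotate i

/-- The finset of all lists over `Fin N` of length at most `k`. -/
def listsUpTo (N k : ℕ) : Finset (List (Fin N)) :=
  (Finset.range (k + 1)).biUnion fun r =>
    (Finset.univ : Finset (Fin r → Fin N)).image List.ofFn

variable {V : Type*}

/-- `c` is a cycle: the terminal of each arc is the origin of the cyclically next arc. -/
def IsDartCycle (G : SimpleGraph V) {N : ℕ} (ε : Fin N ≃ G.Dart) (c : List (Fin N)) : Prop :=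
  c ≠ [] ∧ List.Forall₂ (fun a b => (ε a).snd = (ε b).fst) c (c.rotate 1)

/-- `c` is reduced: no arc is cyclically followed by its inverse (this includes the wrap-around
pair, i.e. both `C` and `C²` have no backtracking). -/
def IsDartReduced (G : SimpleGraph V) {N : ℕ} (ε : Fin N ≃ G.Dart) (c : List (Fin N)) : Prop :=
  List.Forall₂ (fun a b => ε b ≠ (ε a).symm) c (c.rotate 1)

open scoped Classical in
/-- All reduced Lyndon cycles of length at most `k`. -/
def lyndonCyclesUpTo (G : SimpleGraph V) {N : ℕ} (ε : Fin N ≃ G.Dart) (k : ℕ) :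
    Finset (List (Fin N)) :=
  (listsUpTo N k).filter fun c => IsLyndon c ∧ IsDartCycle G ε c ∧ IsDartReduced G ε c

/-- The quaternionic weight (norm) `w(C)` of a cycle. -/
def cycWeight {G : SimpleGraph V} {N : ℕ} (ε : Fin N ≃ G.Dart) (w : G.Dart → ℍ[ℝ])
    (c : List (Fin N)) : ℍ[ℝ] :=
  (c.map fun i => w (ε i)).prod

/-- `(1 - w(C) t^{|C|})(1 - w(C) t^{|C|})^* = 1 - 2 Re(w(C)) t^{|C|} + |w(C)|² t^{2|C|}`,
an element of `ℝ[[t]]`. -/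
def cycFactor (x : ℍ[ℝ]) (r : ℕ) : PowerSeries ℝ :=
  1 - PowerSeries.C (2 * x.re) * PowerSeries.X ^ r
    + PowerSeries.C (Quaternion.normSq x) * PowerSeries.X ^ (2 * r)

/-- The quaternionic weighted zeta function `Z_ℍ(G,w,t)`, as an element of `ℝ[[t]] ⊆ ℍ[[t]]`:
its `k`-th coefficient is the `k`-th coefficient of the (finite) product of the inverted
factors over all reduced Lyndon cycles of length at most `k`. -/
def quatZeta (G : SimpleGraph V) {N : ℕ} (ε : Fin N ≃ G.Dart) (w : G.Dart → ℍ[ℝ]) :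
    PowerSeries ℝ :=
  PowerSeries.mk fun k =>
    PowerSeries.coeff k
      (∏ c ∈ lyndonCyclesUpTo G ε k, (cycFactor (cycWeight ε w c) c.length)⁻¹)

variable [DecidableEq V]

/-- The matrix `B_w`. -/
def Bw (G : SimpleGraph V) (w : G.Dart → ℍ[ℝ]) : Matrix G.Dart G.Dart ℍ[ℝ] :=
  fun e f => if e.snd = f.fst then w e else 0

/-- The matrix `J_w`. -/
def Jw (G : SimpleGraph V) (w : G.Dart → ℍ[ℝ]) : Matrix G.Dart G.Dart ℍ[ℝ] :=
  fun e f => if f = e.symm then w e else 0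

/-- The formal exponential `exp α = ∑_{m≥0} α^m/m!` of a real power series with zero constant
term, defined coefficientwise by truncation (only terms with `m ≤ k` contribute to the `k`-th
coefficient). -/
def pExp (α : PowerSeries ℝ) : PowerSeries ℝ :=
  PowerSeries.mk fun k =>
    PowerSeries.coeff k (∑ m ∈ Finset.range (k + 1), (m.factorial : ℝ)⁻¹ • α ^ m)

/-- The generating function `∑_{n≥1} ∑_C (2 Re(w(C)^n)/n) t^{n|C|}`, where `C` runs over all
reduced Lyndon cycles; its `k`-th coefficient is the finite sum over pairs `(n, C)` with
`n·|C| = k`. -/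
def genFun {V : Type*} (G : SimpleGraph V) {N : ℕ} (ε : Fin N ≃ G.Dart)
    (w : G.Dart → ℍ[ℝ]) : PowerSeries ℝ :=
  PowerSeries.mk fun k =>
    ∑ n ∈ Finset.Icc 1 k,
      ∑ c ∈ (lyndonCyclesUpTo G ε k).filter (fun c => n * c.length = k),
        2 * ((cycWeight ε w c) ^ n).re / (n : ℝ)

/-! ### Auxiliary material for the proof -/

section AuxZeta

open PowerSeries Finset

/-- Coefficientwise agreement up to degree `k`. -/
def PApprox (k : ℕ) (α β : PowerSeries ℝ) : Prop :=
  ∀ j ≤ k, PowerSeries.coeff j α = PowerSeries.coeff j β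

lemma PApprox.refl (k : ℕ) (α : PowerSeries ℝ) : PApprox k α α := fun _ _ => rfl

lemma PApprox.symm' {k : ℕ} {α β : PowerSeries ℝ} (h : PApprox k α β) : PApprox k β α :=
  fun j hj => (h j hj).symm

lemma PApprox.mul {k : ℕ} {α β γ δ : PowerSeries ℝ} (h1 : PApprox k α γ)
    (h2 : PApprox k β δ) : PApprox k (α * β) (γ * δ) := by
  intro j hj
  rw [coeff_mul, coeff_mul]
  refine Finset.sum_congr rfl fun p hp => ?_
  rw [Finset.HasAntidiagonal.mem_antidiagonal] at hp
  have hp1 : p.1 ≤ k := le_trans (hp ▸ Nat.le_add_right p.1 p.2) hj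
  have hp2 : p.2 ≤ k := le_trans (hp ▸ Nat.le_add_left p.2 p.1) hj
  rw [h1 p.1 hp1, h2 p.2 hp2]

lemma PApprox.inv_one {k : ℕ} {F : PowerSeries ℝ} (h : PApprox k F 1) :
    PApprox k F⁻¹ 1 := by
  have h0 : constantCoeff F = 1 := by
    have := h 0 (Nat.zero_le _)
    simpa [coeff_zero_eq_constantCoeff] using this
  have hne : constantCoeff F ≠ 0 := by rw [h0]; exact one_ne_zero
  have hFinv : F * F⁻¹ = 1 := PowerSeries.mul_inv_cancel F hne
  intro j hj
  have key : PowerSeries.coeff j (F * F⁻¹) = PowerSeries.coeff j 1 := by rw [hFinv]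
  rw [coeff_mul, Finset.sum_eq_single ((0 : ℕ), j)] at key
  · rw [← key, coeff_zero_eq_constantCoeff_apply, h0, one_mul]
  · rintro ⟨p1, p2⟩ hp hne'
    rw [Finset.HasAntidiagonal.mem_antidiagonal] at hp
    have hp1 : p1 ≠ 0 := by
      rintro rfl
      exact hne' (by simp at hp; simp [hp])
    have : PowerSeries.coeff p1 F = 0 := by
      rw [h p1 (le_trans (hp ▸ Nat.le_add_right p1 p2) hj), coeff_one, if_neg hp1]
    simp [this]
  · intro hnot
    exact absurd (Finset.HasAntidiagonal.mem_antidiagonal.2 (by simp)) hnot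

lemma PApprox.prod_one {ι : Type*} {k : ℕ} (s : Finset ι) (F : ι → PowerSeries ℝ)
    (h : ∀ i ∈ s, PApprox k (F i) 1) : PApprox k (∏ i ∈ s, F i) 1 := by
  classical
  induction s using Finset.induction_on with
  | empty => simpa using PApprox.refl k 1
  | insert _ _ hni ih =>
    rename_i a s
    rw [Finset.prod_insert hni]
    have := PApprox.mul (h a (Finset.mem_insert_self _ _))
      (ih fun i hi => h i (Finset.mem_insert_of_mem hi))
    rwa [one_mul] at this

lemma PApprox.deriv {k : ℕ} {α β : PowerSeries ℝ} (h : PApprox (k + 1) α β) :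
    PApprox k (d⁄dX ℝ α) (d⁄dX ℝ β) := by
  intro j hj
  rw [coeff_derivative, coeff_derivative, h (j + 1) (by omega)]

lemma coeff_pow_eq_zero' {α : PowerSeries ℝ} (h0 : constantCoeff α = 0) {m j : ℕ}
    (h : j < m) : PowerSeries.coeff j (α ^ m) = 0 := by
  obtain ⟨β, rfl⟩ := PowerSeries.X_dvd_iff.2 h0
  rw [mul_pow, coeff_X_pow_mul', if_neg (by omega)]

lemma coeff_pExp_eq (α : PowerSeries ℝ) (h0 : constantCoeff α = 0) {k K : ℕ} (hk : k ≤ K) :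
    PowerSeries.coeff k (pExp α) =
      PowerSeries.coeff k (∑ m ∈ Finset.range (K + 1), (m.factorial : ℝ)⁻¹ • α ^ m) := by
  rw [pExp, coeff_mk, map_sum, map_sum]
  refine Finset.sum_subset (Finset.range_subset_range.2 (by omega)) fun m hm hnm => ?_
  have hkm : k < m := by
    rw [Finset.mem_range] at hm
    rw [Finset.mem_range] at hnm
    omega
  rw [map_smul, coeff_pow_eq_zero' h0 hkm, smul_zero]

lemma constantCoeff_pExp (α : PowerSeries ℝ) : constantCoeff (pExp α) = 1 := by
  rw [← coeff_zero_eq_constantCoeff_apply, pExp, coeff_mk]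
  simp

lemma deriv_pExp (α : PowerSeries ℝ) (h0 : constantCoeff α = 0) :
    d⁄dX ℝ (pExp α) = d⁄dX ℝ α * pExp α := by
  ext k
  have step : ∀ m : ℕ, d⁄dX ℝ (((m + 1).factorial : ℝ)⁻¹ • α ^ (m + 1))
      = (m.factorial : ℝ)⁻¹ • (α ^ m * d⁄dX ℝ α) := by
    intro m
    rw [Derivation.map_smul, Derivation.leibniz_pow]
    have hsm : ((m : ℕ) + 1) • α ^ (m + 1 - 1) • d⁄dX ℝ α
        = (((m : ℝ) + 1)) • (α ^ m * d⁄dX ℝ α) := by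
      rw [Nat.add_sub_cancel, smul_eq_mul]
      push_cast [← Nat.cast_smul_eq_nsmul ℝ]
      ring_nf
    rw [hsm, smul_smul]
    congr 1
    rw [Nat.factorial_succ]
    have h1 : ((m.factorial : ℝ)) ≠ 0 := by exact_mod_cast m.factorial_ne_zero
    have h2 : ((m : ℝ) + 1) ≠ 0 := by positivity
    push_cast
    field_simp
  have hT : d⁄dX ℝ (∑ m ∈ Finset.range (k + 2), (m.factorial : ℝ)⁻¹ • α ^ m)
      = d⁄dX ℝ α * ∑ m ∈ Finset.range (k + 1), (m.factorial : ℝ)⁻¹ • α ^ m := by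
    rw [map_sum, Finset.sum_range_succ']
    simp only [step]
    rw [Finset.mul_sum]
    simp [mul_comm, mul_smul_comm, mul_assoc]
  calc PowerSeries.coeff k (d⁄dX ℝ (pExp α))
      = PowerSeries.coeff (k + 1) (pExp α) * (k + 1) := coeff_derivative _ _
    _ = PowerSeries.coeff (k + 1)
          (∑ m ∈ Finset.range (k + 2), (m.factorial : ℝ)⁻¹ • α ^ m) * (k + 1) := by
        rw [coeff_pExp_eq α h0 (le_refl (k + 1))]
    _ = PowerSeries.coeff k
          (d⁄dX ℝ (∑ m ∈ Finset.range (k + 2), (m.factorial : ℝ)⁻¹ • α ^ m)) :=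
        (coeff_derivative _ _).symm
    _ = PowerSeries.coeff k
          (d⁄dX ℝ α * ∑ m ∈ Finset.range (k + 1), (m.factorial : ℝ)⁻¹ • α ^ m) := by rw [hT]
    _ = PowerSeries.coeff k (d⁄dX ℝ α * pExp α) :=
        PApprox.mul (PApprox.refl k _) (fun j hj => (coeff_pExp_eq α h0 hj).symm) k le_rfl

lemma ode_unique {h f₁ f₂ : PowerSeries ℝ}
    (hc : constantCoeff f₁ = constantCoeff f₂)
    (h1 : d⁄dX ℝ f₁ = h * f₁) (h2 : d⁄dX ℝ f₂ = h * f₂) : f₁ = f₂ := by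
  ext k
  induction k using Nat.strong_induction_on with
  | _ k ih =>
    match k with
    | 0 => simpa [coeff_zero_eq_constantCoeff] using hc
    | k + 1 =>
      have e1 : PowerSeries.coeff (k + 1) f₁ * (k + 1)
          = PowerSeries.coeff (k + 1) f₂ * (k + 1) := by
        rw [← coeff_derivative, ← coeff_derivative, h1, h2]
        exact PApprox.mul (PApprox.refl (k : ℕ) h) (fun j hj => ih j (by omega)) k le_rfl
      have hne : ((k : ℝ) + 1) ≠ 0 := by positivity
      exact mul_right_cancel₀ (by exact_mod_cast hne) e1

end AuxZeta

section AuxQuat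

open PowerSeries Finset Quaternion

lemma quat_sq (x : ℍ[ℝ]) :
    x * x = (2 * x.re) • x - (Quaternion.normSq x) • (1 : ℍ[ℝ]) := by
  ext <;>
    simp [Quaternion.normSq_def', Quaternion.re_mul, Quaternion.imI_mul, Quaternion.imJ_mul,
      Quaternion.imK_mul] <;> ring

lemma re_pow_rec (x : ℍ[ℝ]) (n : ℕ) :
    (x ^ (n + 2)).re = 2 * x.re * (x ^ (n + 1)).re - Quaternion.normSq x * (x ^ n).re := by
  have h : x ^ (n + 2) = (2 * x.re) • x ^ (n + 1) - Quaternion.normSq x • x ^ n := by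
    calc x ^ (n + 2) = x ^ n * (x * x) := by rw [← pow_two, ← pow_add]
      _ = x ^ n * ((2 * x.re) • x - (Quaternion.normSq x) • (1 : ℍ[ℝ])) := by rw [quat_sq]
      _ = (2 * x.re) • (x ^ n * x) - Quaternion.normSq x • (x ^ n * 1) := by
          rw [mul_sub, mul_smul_comm, mul_smul_comm]
      _ = (2 * x.re) • x ^ (n + 1) - Quaternion.normSq x • x ^ n := by
          rw [mul_one, pow_succ]
  rw [h]
  simp [Quaternion.re_sub, Quaternion.re_smul, smul_eq_mul]

/-- The generating series of a single cycle factor. -/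
def cycGen (x : ℍ[ℝ]) (r : ℕ) : PowerSeries ℝ :=
  PowerSeries.mk fun k =>
    if r ∣ k ∧ 0 < k then 2 * ((x ^ (k / r)).re) / ((k / r : ℕ) : ℝ) else 0

lemma coeff_deriv_cycGen (x : ℍ[ℝ]) {r : ℕ} (hr : 0 < r) (j : ℕ) :
    PowerSeries.coeff j (d⁄dX ℝ (cycGen x r)) =
      if r ∣ (j + 1) then 2 * r * ((x ^ ((j + 1) / r)).re) else 0 := by
  rw [coeff_derivative, cycGen, coeff_mk]
  by_cases h : r ∣ (j + 1)
  · rw [if_pos ⟨h, Nat.succ_pos j⟩, if_pos h]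
    obtain ⟨q, hq⟩ := h
    have hq0 : 0 < q := by
      rcases Nat.eq_zero_or_pos q with rfl | h'
      · omega
      · exact h'
    rw [hq, Nat.mul_div_cancel_left q hr]
    have hcast : ((j : ℝ) + 1) = (r : ℝ) * q := by exact_mod_cast congrArg Nat.cast hq
    rw [hcast]
    have hqR : (q : ℝ) ≠ 0 := by positivity
    field_simp
  · rw [if_neg (fun hc => h hc.1), if_neg h, zero_mul]

lemma coeff_cycFactor (x : ℍ[ℝ]) (r i : ℕ) :
    PowerSeries.coeff i (cycFactor x r) =
      (if i = 0 then 1 else 0) - (if i = r then 2 * x.re else 0)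
        + (if i = 2 * r then Quaternion.normSq x else 0) := by
  rw [cycFactor, map_add, map_sub, coeff_one, coeff_C_mul, coeff_C_mul, coeff_X_pow,
    coeff_X_pow, mul_ite, mul_ite, mul_one, mul_zero, mul_one, mul_zero]

lemma cycGen_deriv_mul (x : ℍ[ℝ]) {r : ℕ} (hr : 0 < r) :
    d⁄dX ℝ (cycGen x r) * cycFactor x r = - d⁄dX ℝ (cycFactor x r) := by
  ext k
  have expand : d⁄dX ℝ (cycGen x r) * cycFactor x r
      = d⁄dX ℝ (cycGen x r)
        - PowerSeries.C (2 * x.re) * (d⁄dX ℝ (cycGen x r) * PowerSeries.X ^ r)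
        + PowerSeries.C (Quaternion.normSq x) *
            (d⁄dX ℝ (cycGen x r) * PowerSeries.X ^ (2 * r)) := by
    rw [cycFactor]; ring
  rw [expand, map_neg, coeff_derivative, map_add, map_sub, coeff_C_mul, coeff_C_mul,
    coeff_mul_X_pow', coeff_mul_X_pow', coeff_cycFactor]
  simp only [coeff_deriv_cycGen x hr]
  by_cases hd : r ∣ (k + 1)
  · obtain ⟨n, hn⟩ := hd
    match n with
    | 0 => omega
    | 1 =>
      have hkr : k + 1 = r := by omega
      have h1 : ¬ r ≤ k := by omega
      have h2 : ¬ 2 * r ≤ k := by omega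
      have h3 : ¬ k + 1 = 2 * r := by omega
      have h4 : ¬ k + 1 = 0 := by omega
      have hdiv : (k + 1) / r = 1 := by rw [hkr, Nat.div_self hr]
      rw [if_pos ⟨1, hn⟩, hdiv, if_neg h1, if_neg h2, if_neg h3, if_neg h4, if_pos hkr]
      have hcast : ((k : ℝ) + 1) = (r : ℝ) := by exact_mod_cast congrArg Nat.cast hkr
      rw [hcast, pow_one]
      ring
    | 2 =>
      have hkr : k + 1 = 2 * r := by omega
      have h1 : r ≤ k := by omega
      have h2 : ¬ 2 * r ≤ k := by omega
      have h3 : ¬ k + 1 = r := by omega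
      have h4 : ¬ k + 1 = 0 := by omega
      have hdiv : (k + 1) / r = 2 := by
        rw [hn, Nat.mul_div_cancel_left _ hr]
      have hkr1 : k - r + 1 = r := by omega
      have hdvd1 : r ∣ k - r + 1 := by rw [hkr1]
      have hdiv1 : (k - r + 1) / r = 1 := by rw [hkr1, Nat.div_self hr]
      rw [if_pos ⟨2, hn⟩, hdiv, if_pos h1, if_pos hdvd1, hdiv1, if_neg h2, if_neg h3,
        if_neg h4, if_pos hkr]
      have hcast : ((k : ℝ) + 1) = 2 * (r : ℝ) := by exact_mod_cast congrArg Nat.cast hkr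
      have hre := re_pow_rec x 0
      rw [pow_zero, Quaternion.re_one] at hre
      norm_num at hre
      rw [hcast, pow_one]
      linear_combination 2 * (r : ℝ) * hre
    | (m + 3) =>
      obtain ⟨t, ht⟩ : ∃ t, r * m = t := ⟨_, rfl⟩
      have hlin : k + 1 = t + 3 * r := by
        have : r * (m + 3) = r * m + 3 * r := by ring
        omega
      have h1 : r ≤ k := by omega
      have h2 : 2 * r ≤ k := by omega
      have h3 : ¬ k + 1 = r := by omega
      have h3' : ¬ k + 1 = 2 * r := by omega
      have h4 : ¬ k + 1 = 0 := by omega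
      have hdiv : (k + 1) / r = m + 3 := by rw [hn, Nat.mul_div_cancel_left _ hr]
      have e1 : k - r + 1 = r * (m + 2) := by
        have : r * (m + 2) = t + 2 * r := by rw [← ht]; ring
        omega
      have e2 : k - 2 * r + 1 = r * (m + 1) := by
        have : r * (m + 1) = t + r := by rw [← ht]; ring
        omega
      have hdvd1 : r ∣ k - r + 1 := ⟨m + 2, e1⟩
      have hdvd2 : r ∣ k - 2 * r + 1 := ⟨m + 1, e2⟩
      have hdiv1 : (k - r + 1) / r = m + 2 := by rw [e1, Nat.mul_div_cancel_left _ hr]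
      have hdiv2 : (k - 2 * r + 1) / r = m + 1 := by rw [e2, Nat.mul_div_cancel_left _ hr]
      rw [if_pos ⟨m + 3, hn⟩, hdiv, if_pos h1, if_pos hdvd1, hdiv1, if_pos h2, if_pos hdvd2,
        hdiv2, if_neg h3, if_neg h3', if_neg h4]
      have hre := re_pow_rec x (m + 1)
      have em1 : m + 1 + 2 = m + 3 := by omega
      have em2 : m + 1 + 1 = m + 2 := by omega
      rw [em1, em2] at hre
      linear_combination 2 * (r : ℝ) * hre
  · have h1 : ¬ (k + 1 = r) := fun h => hd (h ▸ dvd_refl r)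
    have h2 : ¬ (k + 1 = 2 * r) := fun h => hd ⟨2, by omega⟩
    have h4 : ¬ k + 1 = 0 := by omega
    have e1 : (if r ≤ k then
        (if r ∣ (k - r + 1) then 2 * r * ((x ^ ((k - r + 1) / r)).re) else 0) else 0) = 0 := by
      split
      · rw [if_neg]
        intro hc
        apply hd
        have heq : k - r + 1 + r = k + 1 := by omega
        have := Nat.dvd_add hc (dvd_refl r)
        rwa [heq] at this
      · rfl
    have e2 : (if 2 * r ≤ k then
        (if r ∣ (k - 2 * r + 1) then 2 * r * ((x ^ ((k - 2 * r + 1) / r)).re) else 0) else 0)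
        = 0 := by
      split
      · rw [if_neg]
        intro hc
        apply hd
        have heq : k - 2 * r + 1 + r * 2 = k + 1 := by omega
        have := Nat.dvd_add hc (⟨2, rfl⟩ : r ∣ r * 2)
        rwa [heq] at this
      · rfl
    rw [if_neg hd, e1, e2, if_neg h1, if_neg h2, if_neg h4]
    ring

end AuxQuat

section AuxStruct

open PowerSeries Finset Quaternion

lemma constantCoeff_cycFactor (x : ℍ[ℝ]) {r : ℕ} (hr : 0 < r) :
    PowerSeries.constantCoeff (cycFactor x r) = 1 := by
  have := coeff_cycFactor x r 0
  rw [coeff_zero_eq_constantCoeff] at this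
  rw [this, if_pos rfl, if_neg (by omega), if_neg (by omega)]
  ring

lemma deriv_inv_cycFactor (x : ℍ[ℝ]) {r : ℕ} (hr : 0 < r) :
    d⁄dX ℝ (cycFactor x r)⁻¹ = d⁄dX ℝ (cycGen x r) * (cycFactor x r)⁻¹ := by
  have hc := constantCoeff_cycFactor x hr
  have hne : PowerSeries.constantCoeff (cycFactor x r) ≠ 0 := by
    rw [hc]; exact one_ne_zero
  have hF0 : cycFactor x r ≠ 0 := fun h => hne (by rw [h]; simp)
  have hmul : cycFactor x r * (cycFactor x r)⁻¹ = 1 := PowerSeries.mul_inv_cancel _ hne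
  have hd := congrArg (d⁄dX ℝ) hmul
  rw [Derivation.leibniz, smul_eq_mul, smul_eq_mul, Derivation.map_one_eq_zero] at hd
  apply mul_left_cancel₀ hF0
  have hsolve : cycFactor x r * d⁄dX ℝ (cycFactor x r)⁻¹
      = -(d⁄dX ℝ (cycFactor x r)) * (cycFactor x r)⁻¹ := by
    have := eq_neg_of_add_eq_zero_left hd
    rw [this]; ring
  rw [hsolve, ← cycGen_deriv_mul x hr]
  ring

lemma deriv_prod_aux {ι : Type*} (s : Finset ι) (F g : ι → PowerSeries ℝ)
    (h : ∀ i ∈ s, d⁄dX ℝ (F i) = g i * F i) :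
    d⁄dX ℝ (∏ i ∈ s, F i) = (∑ i ∈ s, g i) * ∏ i ∈ s, F i := by
  classical
  induction s using Finset.induction_on with
  | empty => simp
  | insert _ _ hni ih =>
    rename_i a s
    rw [Finset.prod_insert hni, Finset.sum_insert hni, Derivation.leibniz, smul_eq_mul,
      smul_eq_mul, ih (fun i hi => h i (Finset.mem_insert_of_mem hi)),
      h a (Finset.mem_insert_self _ _)]
    ring

lemma mem_listsUpTo {N k : ℕ} {l : List (Fin N)} : l ∈ listsUpTo N k ↔ l.length ≤ k := by
  simp only [listsUpTo, Finset.mem_biUnion, Finset.mem_range, Finset.mem_image,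
    Finset.mem_univ, true_and]
  constructor
  · rintro ⟨r, hr, f, rfl⟩
    simp only [List.length_ofFn]
    omega
  · intro h
    exact ⟨l.length, by omega, l.get, List.ofFn_get l⟩

variable {V : Type*} (G : SimpleGraph V) {N : ℕ} (ε : Fin N ≃ G.Dart) (w : G.Dart → ℍ[ℝ])

lemma mem_lyndonCyclesUpTo {k : ℕ} {c : List (Fin N)} :
    c ∈ lyndonCyclesUpTo G ε k ↔
      c.length ≤ k ∧ (IsLyndon c ∧ IsDartCycle G ε c ∧ IsDartReduced G ε c) := by
  classical
  rw [lyndonCyclesUpTo]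
  simp only [Finset.mem_filter, mem_listsUpTo]

lemma length_pos_of_mem {k : ℕ} {c : List (Fin N)} (hc : c ∈ lyndonCyclesUpTo G ε k) :
    0 < c.length :=
  List.length_pos_iff.2 (((mem_lyndonCyclesUpTo G ε).1 hc).2.1.1)

lemma lyndonCyclesUpTo_subset {k K : ℕ} (h : k ≤ K) :
    lyndonCyclesUpTo G ε k ⊆ lyndonCyclesUpTo G ε K := by
  intro c hc
  rw [mem_lyndonCyclesUpTo] at hc ⊢
  exact ⟨hc.1.trans h, hc.2⟩

lemma coeff_quatZeta_eq {j K : ℕ} (h : j ≤ K) :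
    PowerSeries.coeff j (quatZeta G ε w) =
      PowerSeries.coeff j
        (∏ c ∈ lyndonCyclesUpTo G ε K, (cycFactor (cycWeight ε w c) c.length)⁻¹) := by
  classical
  rw [quatZeta, coeff_mk]
  rw [← Finset.prod_sdiff (lyndonCyclesUpTo_subset G ε h)]
  have happ : PApprox j
      (∏ c ∈ lyndonCyclesUpTo G ε K \ lyndonCyclesUpTo G ε j,
        (cycFactor (cycWeight ε w c) c.length)⁻¹) 1 := by
    refine PApprox.prod_one _ _ fun c hc => ?_
    rw [Finset.mem_sdiff] at hc
    have hlen : j < c.length := by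
      by_contra hle
      push_neg at hle
      exact hc.2 ((mem_lyndonCyclesUpTo G ε).2 ⟨hle, ((mem_lyndonCyclesUpTo G ε).1 hc.1).2⟩)
    refine PApprox.inv_one fun i hi => ?_
    rw [coeff_cycFactor, coeff_one, if_neg (show ¬ i = c.length by omega),
      if_neg (show ¬ i = 2 * c.length by omega)]
    ring
  have := PApprox.mul happ (PApprox.refl j
    (∏ c ∈ lyndonCyclesUpTo G ε j, (cycFactor (cycWeight ε w c) c.length)⁻¹)) j le_rfl
  rw [this, one_mul]

lemma constantCoeff_quatZeta : PowerSeries.constantCoeff (quatZeta G ε w) = 1 := by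
  rw [← coeff_zero_eq_constantCoeff_apply, coeff_quatZeta_eq G ε w (le_refl 0)]
  have happ : PApprox 0
      (∏ c ∈ lyndonCyclesUpTo G ε 0, (cycFactor (cycWeight ε w c) c.length)⁻¹) 1 := by
    refine PApprox.prod_one _ _ fun c hc => ?_
    refine PApprox.inv_one fun i hi => ?_
    have hi0 : i = 0 := by omega
    subst hi0
    have hlen := length_pos_of_mem G ε hc
    rw [coeff_cycFactor, coeff_one, if_pos rfl,
      if_neg (show ¬ (0 : ℕ) = c.length by omega),
      if_neg (show ¬ (0 : ℕ) = 2 * c.length by omega)]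
    ring
  rw [happ 0 le_rfl]
  simp

lemma coeff_genFun_eq {j K : ℕ} (h : j ≤ K) :
    PowerSeries.coeff j (genFun G ε w) =
      ∑ c ∈ lyndonCyclesUpTo G ε K,
        PowerSeries.coeff j (cycGen (cycWeight ε w c) c.length) := by
  classical
  rw [genFun, coeff_mk]
  rcases Nat.eq_zero_or_pos j with rfl | hj
  · rw [Finset.Icc_eq_empty (by omega), Finset.sum_empty]
    refine (Finset.sum_eq_zero fun c hc => ?_).symm
    rw [cycGen, coeff_mk, if_neg (by omega)]
  · have hRHS : ∀ c ∈ lyndonCyclesUpTo G ε K,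
        PowerSeries.coeff j (cycGen (cycWeight ε w c) c.length) =
          if c.length ∣ j then
            2 * ((cycWeight ε w c) ^ (j / c.length)).re / ((j / c.length : ℕ) : ℝ) else 0 := by
      intro c hc
      rw [cycGen, coeff_mk]
      by_cases hdvd : c.length ∣ j
      · rw [if_pos ⟨hdvd, hj⟩, if_pos hdvd]
      · rw [if_neg (fun hcon => hdvd hcon.1), if_neg hdvd]
    rw [Finset.sum_congr rfl hRHS, ← Finset.sum_filter]
    have hsets : (lyndonCyclesUpTo G ε K).filter (fun c => c.length ∣ j)
        = (lyndonCyclesUpTo G ε j).filter (fun c => c.length ∣ j) := by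
      ext c
      simp only [Finset.mem_filter, mem_lyndonCyclesUpTo]
      constructor
      · rintro ⟨⟨hle, hP⟩, hdvd⟩
        exact ⟨⟨Nat.le_of_dvd hj hdvd, hP⟩, hdvd⟩
      · rintro ⟨⟨hle, hP⟩, hdvd⟩
        exact ⟨⟨hle.trans h, hP⟩, hdvd⟩
    rw [hsets]
    have hswap : (∑ n ∈ Finset.Icc 1 j,
        ∑ c ∈ (lyndonCyclesUpTo G ε j).filter (fun c => n * c.length = j),
          2 * ((cycWeight ε w c) ^ n).re / (n : ℝ))
        = ∑ c ∈ lyndonCyclesUpTo G ε j, ∑ n ∈ Finset.Icc 1 j,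
            if n * c.length = j then 2 * ((cycWeight ε w c) ^ n).re / (n : ℝ) else 0 := by
      calc (∑ n ∈ Finset.Icc 1 j,
          ∑ c ∈ (lyndonCyclesUpTo G ε j).filter (fun c => n * c.length = j),
            2 * ((cycWeight ε w c) ^ n).re / (n : ℝ))
          = ∑ n ∈ Finset.Icc 1 j, ∑ c ∈ lyndonCyclesUpTo G ε j,
              if n * c.length = j then 2 * ((cycWeight ε w c) ^ n).re / (n : ℝ) else 0 :=
            Finset.sum_congr rfl fun n _ => Finset.sum_filter _ _
        _ = _ := Finset.sum_comm
    rw [hswap, Finset.sum_filter]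
    refine Finset.sum_congr rfl fun c hc => ?_
    have hlen := length_pos_of_mem G ε hc
    by_cases hdvd : c.length ∣ j
    · rw [if_pos hdvd, Finset.sum_eq_single (j / c.length)]
      · rw [if_pos (Nat.div_mul_cancel hdvd)]
      · intro n hn hne
        rw [if_neg]
        intro hcon
        apply hne
        rw [← hcon, Nat.mul_div_cancel _ hlen]
      · intro hnot
        exact absurd (Finset.mem_Icc.2
          ⟨(Nat.one_le_div_iff hlen).2 (Nat.le_of_dvd hj hdvd), Nat.div_le_self _ _⟩) hnot
    · rw [if_neg hdvd]
      refine Finset.sum_eq_zero fun n hn => ?_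
      rw [if_neg]
      intro hcon
      exact hdvd ⟨n, by rw [← hcon]; ring⟩

end AuxStruct

section AuxFinal

open PowerSeries Finset Quaternion

variable {V : Type*} (G : SimpleGraph V) {N : ℕ} (ε : Fin N ≃ G.Dart) (w : G.Dart → ℍ[ℝ])

lemma constantCoeff_genFun : PowerSeries.constantCoeff (genFun G ε w) = 0 := by
  rw [← coeff_zero_eq_constantCoeff_apply, genFun, coeff_mk,
    Finset.Icc_eq_empty (by omega), Finset.sum_empty]

lemma deriv_quatZeta :
    d⁄dX ℝ (quatZeta G ε w) = d⁄dX ℝ (genFun G ε w) * quatZeta G ε w := by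
  classical
  ext k
  set S := lyndonCyclesUpTo G ε (k + 1) with hS
  set P := ∏ c ∈ S, (cycFactor (cycWeight ε w c) c.length)⁻¹ with hPdef
  set Γ := ∑ c ∈ S, cycGen (cycWeight ε w c) c.length with hΓdef
  have hP : d⁄dX ℝ P = (∑ c ∈ S, d⁄dX ℝ (cycGen (cycWeight ε w c) c.length)) * P :=
    deriv_prod_aux S _ _ fun c hc => deriv_inv_cycFactor _ (length_pos_of_mem G ε hc)
  have hdΓ : d⁄dX ℝ Γ = ∑ c ∈ S, d⁄dX ℝ (cycGen (cycWeight ε w c) c.length) := by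
    rw [hΓdef, map_sum]
  have happZ : PApprox (k + 1) (quatZeta G ε w) P := fun j hj => coeff_quatZeta_eq G ε w hj
  have happG : PApprox (k + 1) (genFun G ε w) Γ := fun j hj => by
    rw [coeff_genFun_eq G ε w hj, hΓdef, map_sum]
  calc PowerSeries.coeff k (d⁄dX ℝ (quatZeta G ε w))
      = PowerSeries.coeff (k + 1) (quatZeta G ε w) * (k + 1) := coeff_derivative _ _
    _ = PowerSeries.coeff (k + 1) P * (k + 1) := by rw [happZ (k + 1) le_rfl]
    _ = PowerSeries.coeff k (d⁄dX ℝ P) := (coeff_derivative _ _).symm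
    _ = PowerSeries.coeff k (d⁄dX ℝ Γ * P) := by rw [hP, hdΓ]
    _ = PowerSeries.coeff k (d⁄dX ℝ (genFun G ε w) * quatZeta G ε w) :=
        PApprox.mul (PApprox.symm' (PApprox.deriv happG))
          (fun j hj => (happZ j (by omega)).symm) k le_rfl

end AuxFinal

/-- Theorem 8: the quaternionic weighted zeta function is the exponential of
a generating function: `Z_ℍ(G,w,t) = exp(∑_{n≥1} ∑_C (2Re(w(C)^n)/n) t^{n|C|})`; the generating
function has zero constant term. -/
theorem quatZeta_eq_exp_genFun
    {V : Type*} [Fintype V] [DecidableEq V] (G : SimpleGraph V) [DecidableRel G.Adj]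
    (hG : G.Connected) (m : ℕ) (hm : G.edgeFinset.card = m)
    (ε : Fin (2 * m) ≃ G.Dart) (w : G.Dart → ℍ[ℝ]) :
    PowerSeries.constantCoeff (genFun G ε w) = 0 ∧
      quatZeta G ε w = pExp (genFun G ε w) := by
  refine ⟨constantCoeff_genFun G ε w, ?_⟩
  refine ode_unique (h := d⁄dX ℝ (genFun G ε w)) ?_ (deriv_quatZeta G ε w)
    (deriv_pExp _ (constantCoeff_genFun G ε w))
  rw [constantCoeff_quatZeta, constantCoeff_pExp]

end
end

section
/- For any nonempty word w ∈ X*, there exists a unique nonincreasing sequence of Lyndon words l_1 ≥ l_2 ≥ ⋯ ≥ l_r (with respect to the lexicographic order) such that w = l_1 l_2 ⋯ l_r. -/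
set_option linter.unusedSectionVars false
set_option linter.unusedVariables false

namespace LyndonAux
open List

variable {α : Type*} [LinearOrder α]

theorem prefix_le {a b : List α} (h : a <+: b) : a ≤ b := by
  obtain ⟨t, rfl⟩ := h
  rcases t with _ | ⟨c, t⟩
  · simp
  · have := List.Lex.append_left (· < ·) (List.Lex.nil (a := c) (l := t)) a
    rw [List.append_nil] at this
    exact le_of_lt this

theorem prefix_lt {a b : List α} (h : a <+: b) (hne : a ≠ b) : a < b := by
  rcases (prefix_le h).lt_or_eq with h' | h'
  · exact h'
  · exact absurd h' hne

theorem append_lt_append_left {u a b : List α} : u ++ a < u ++ b ↔ a < b := by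
  constructor
  · intro h
    induction u with
    | nil => exact h
    | cons c u ih => exact ih (by
        have h' : List.Lex (· < ·) (c :: (u ++ a)) (c :: (u ++ b)) := h
        rcases List.cons_lex_cons_iff.1 h' with h'' | h''
        · exact absurd h'' (lt_irrefl _)
        · exact h''.2)
  · intro h
    exact List.Lex.append_left _ h u

theorem lt_append_of_lt_of_not_prefix {a b : List α} (h : a < b) (hp : ¬ a <+: b)
    (x y : List α) : a ++ x < b ++ y := by
  have h' : List.Lex (· < ·) a b := h
  clear h
  induction h' generalizing x y with
  | nil => exact absurd (List.nil_prefix) hp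
  | @rel c l₁ d l₂ hcd => exact List.Lex.rel hcd
  | @cons c l₁ l₂ hl ih =>
      have h2 : l₁ ++ x < l₂ ++ y :=
        ih (fun hpre => hp (List.cons_prefix_cons.2 ⟨rfl, hpre⟩)) x y
      exact List.Lex.cons h2

theorem lt_of_lt_append {a b c : List α} (h : a < b ++ c) (hp : ¬ b <+: a) : a < b := by
  induction b generalizing a with
  | nil => exact absurd (List.nil_prefix) hp
  | cons x b ih =>
      rcases a with _ | ⟨y, a⟩
      · exact List.Lex.nil
      · have h' : List.Lex (· < ·) (y :: a) (x :: (b ++ c)) := h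
        cases h' with
        | rel hr => exact List.Lex.rel hr
        | cons hl =>
            refine List.Lex.cons (ih hl ?_)
            intro hpre
            exact hp (List.cons_prefix_cons.2 ⟨rfl, hpre⟩)

/-- Commuting words are powers of a common word. -/
theorem comm_eq_pow : ∀ n (u v : List α), u.length + v.length ≤ n → u ++ v = v ++ u →
    ∃ (t : List α) (k m : ℕ), u = (List.replicate k t).flatten ∧ v = (List.replicate m t).flatten
  | 0, u, v, hn, _ => by
      have hu : u = [] := by
        have := Nat.le_zero.1 hn
        simpa using List.eq_nil_of_length_eq_zero (by omega)
      have hv : v = [] := by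
        simpa using List.eq_nil_of_length_eq_zero (by omega)
      exact ⟨[], 0, 0, by simp [hu], by simp [hv]⟩
  | n + 1, u, v, hn, h => by
      rcases eq_or_ne u [] with rfl | hu
      · exact ⟨v, 0, 1, by simp, by simp⟩
      rcases eq_or_ne v [] with rfl | hv
      · exact ⟨u, 1, 0, by simp, by simp⟩
      rcases le_total u.length v.length with hle | hle
      · have hpre : u <+: v := by
          refine List.prefix_of_prefix_length_le ?_ (List.prefix_append v u) hle
          rw [← h]; exact List.prefix_append u v
        obtain ⟨w, rfl⟩ := hpre
        have h' : u ++ w = w ++ u := by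
          apply List.append_cancel_left (as := u)
          simpa [List.append_assoc] using h
        have hlen : u.length + w.length ≤ n := by
          have hu' : 0 < u.length := List.length_pos_iff.2 hu
          simp only [List.length_append] at hn ⊢
          omega
        obtain ⟨t, k, m, hu1, hw1⟩ := comm_eq_pow n u w hlen h'
        refine ⟨t, k, k + m, hu1, ?_⟩
        rw [List.replicate_add, List.flatten_append, ← hu1, ← hw1]
      · have hpre : v <+: u := by
          refine List.prefix_of_prefix_length_le ?_ (List.prefix_append u v) hle
          rw [h]; exact List.prefix_append v u
        obtain ⟨w, rfl⟩ := hpre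
        have h' : v ++ w = w ++ v := by
          apply List.append_cancel_left (as := v)
          simpa [List.append_assoc] using h.symm
        have hlen : v.length + w.length ≤ n := by
          have hv' : 0 < v.length := List.length_pos_iff.2 hv
          simp only [List.length_append] at hn ⊢
          omega
        obtain ⟨t, k, m, hv1, hw1⟩ := comm_eq_pow n v w hlen h'
        refine ⟨t, k + m, k, ?_, hv1⟩
        rw [List.replicate_add, List.flatten_append, ← hv1, ← hw1]

theorem flatten_replicate_length (t : List α) (k : ℕ) :
    ((List.replicate k t).flatten).length = k * t.length := by
  induction k with
  | zero => simp
  | succ k ih => simp [List.replicate_succ, ih, Nat.succ_mul, Nat.add_comm]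

/-- Strict rotation inequality for Lyndon words. -/
theorem lyndon_lt_rotate {l u v : List α} (hl : IsLyndon l) (hu : u ≠ []) (hv : v ≠ [])
    (hsplit : l = u ++ v) : l < v ++ u := by
  obtain ⟨hne, hprim, hrot⟩ := hl
  have hulen : 0 < u.length := List.length_pos_iff.2 hu
  have hvlen : 0 < v.length := List.length_pos_iff.2 hv
  have hlen : l.length = u.length + v.length := by rw [hsplit]; simp
  have hle : l ≤ v ++ u := by
    have h1 := hrot u.length (by omega)
    rw [List.rotate_eq_drop_append_take (by omega), hsplit,
      List.drop_left, List.take_left] at h1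
    rw [hsplit]
    exact h1
  rcases hle.lt_or_eq with h | h
  · exact h
  · exfalso
    have hcomm : u ++ v = v ++ u := by rw [← hsplit, h]
    obtain ⟨t, k, m, hu1, hv1⟩ := comm_eq_pow (u.length + v.length) u v le_rfl hcomm
    have ht : t ≠ [] := by
      rintro rfl
      simp at hu1
      exact hu hu1
    have hk : 1 ≤ k := by
      by_contra h'
      push_neg at h'
      interval_cases k
      simp at hu1
      exact hu hu1
    have hm : 1 ≤ m := by
      by_contra h'
      push_neg at h'
      interval_cases m
      simp at hv1
      exact hv hv1
    refine hprim ⟨t, k + m, by omega, ?_, ?_⟩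
    · have htlen : 0 < t.length := List.length_pos_iff.2 ht
      have h2 : u.length = k * t.length := by rw [hu1, flatten_replicate_length]
      have h3 : v.length = m * t.length := by rw [hv1, flatten_replicate_length]
      have : 2 ≤ k + m := by omega
      nlinarith
    · rw [hsplit, List.replicate_add, List.flatten_append, ← hu1, ← hv1]

/-- A Lyndon word is smaller than each of its proper suffixes. -/
theorem lyndon_lt_suffix {l u v : List α} (hl : IsLyndon l) (hsplit : l = u ++ v)
    (hu : u ≠ []) (hv : v ≠ []) : l < v := by
  have hrot := lyndon_lt_rotate hl hu hv hsplit
  by_cases hpre : v <+: l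
  · exfalso
    obtain ⟨w, hw⟩ := hpre
    have hwne : w ≠ [] := by
      rintro rfl
      rw [List.append_nil] at hw
      have : l.length = u.length + v.length := by rw [hsplit]; simp
      have : v.length = l.length := by rw [hw]
      have := List.length_pos_iff.2 hu
      omega
    have hrot2 := lyndon_lt_rotate hl hv hwne hw.symm
    -- hrot : l < v ++ u, hrot2 : l < w ++ v
    have hlenuw : u.length = w.length := by
      have h1 : l.length = u.length + v.length := by rw [hsplit]; simp
      have h2 : l.length = v.length + w.length := by rw [← hw]; simp
      omega
    -- from hsplit, hw : u ++ v = v ++ w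
    have heq : u ++ v = v ++ w := by rw [← hsplit, ← hw]
    -- l = v ++ w < v ++ u gives w < u
    have hwu : w < u := by
      have h6 : v ++ w < v ++ u := by rw [hw]; exact hrot
      exact append_lt_append_left.1 h6
    -- l = u ++ v < w ++ v
    have h4 : u ++ v < w ++ v := by rw [← hsplit]; exact hrot2
    have h5 : w ++ v < u ++ v := by
      have hnp : ¬ w <+: u := by
        intro hp
        exact absurd (List.IsPrefix.eq_of_length hp hlenuw.symm) (ne_of_lt hwu)
      exact lt_append_of_lt_of_not_prefix hwu hnp v v
    exact absurd (h4.trans h5) (lt_irrefl _)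
  · exact lt_of_lt_append hrot hpre

/-- The suffix condition implies Lyndon. -/
theorem lyndon_of_suffix {l : List α} (hne : l ≠ [])
    (h : ∀ u v, l = u ++ v → u ≠ [] → v ≠ [] → l < v) : IsLyndon l := by
  refine ⟨hne, ?_, ?_⟩
  · rintro ⟨v, r, hr, hvl, hflat⟩
    have hv : v ≠ [] := by
      rintro rfl
      apply hne
      rw [hflat]
      simp
    have hvlen : 0 < v.length := List.length_pos_iff.2 hv
    set s := (List.replicate (r - 1) v).flatten with hs
    have hslen : s.length = (r - 1) * v.length := flatten_replicate_length v (r - 1)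
    have hllen : l.length = r * v.length := by rw [hflat, flatten_replicate_length]
    have hsposlen : 0 < s.length := by
      rw [hslen]; exact Nat.mul_pos (by omega) hvlen
    have hsne : s ≠ [] := by
      intro h0
      rw [h0] at hsposlen
      simp at hsposlen
    have hsplit1 : l = v ++ s := by
      rw [hflat, hs, ← List.flatten_cons, ← List.replicate_succ]
      congr 1
      congr 1
      omega
    have hsplit2 : l = s ++ v := by
      conv_lhs => rw [hflat]
      have : r = (r - 1) + 1 := by omega
      rw [this, List.replicate_add, List.flatten_append]
      simp [hs]
    have h1 : l < s := h v s hsplit1 hv hsne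
    have hsl : s.length < l.length := by
      rw [hslen, hllen]
      exact Nat.mul_lt_mul_of_pos_right (by omega) hvlen
    have h2 : s < l := by
      refine prefix_lt ⟨v, hsplit2.symm⟩ ?_
      intro h0
      rw [h0] at hsl
      exact absurd hsl (lt_irrefl _)
    exact absurd (h1.trans h2) (lt_irrefl _)
  · intro i hi
    rcases Nat.eq_zero_or_pos i with rfl | hpos
    · simp
    · set u := l.take i with hu
      set v := l.drop i with hv
      have hsplit : l = u ++ v := (List.take_append_drop i l).symm
      have hune : u ≠ [] := by
        intro h0
        have h9 := congrArg List.length h0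
        rw [hu, List.length_take, List.length_nil, Nat.min_eq_left (le_of_lt hi)] at h9
        omega
      have hvne : v ≠ [] := by
        intro h0
        have h9 := congrArg List.length h0
        rw [hv, List.length_drop, List.length_nil] at h9
        omega
      have hlt : l < v := h u v hsplit hune hvne
      have hnp : ¬ l <+: v := by
        intro hp
        have h7 := hp.length_le
        have h8 : v.length = l.length - i := by rw [hv, List.length_drop]
        omega
      have := lt_append_of_lt_of_not_prefix hlt hnp [] u
      rw [List.append_nil] at this
      rw [List.rotate_eq_drop_append_take (le_of_lt hi)]
      exact le_of_lt this

/-- Concatenation of Lyndon words `u < v` is Lyndon. -/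
theorem lyndon_append {u v : List α} (hu : IsLyndon u) (hv : IsLyndon v) (huv : u < v) :
    IsLyndon (u ++ v) := by
  have hune := hu.1
  have hvne := hv.1
  have hstep : u ++ v < v := by
    by_cases hpre : u <+: v
    · obtain ⟨t, rfl⟩ := hpre
      have htne : t ≠ [] := by
        rintro rfl
        rw [List.append_nil] at huv
        exact absurd huv (lt_irrefl _)
      have h3 : u ++ t < t := lyndon_lt_suffix hv rfl hune htne
      exact append_lt_append_left.2 h3
    · have := lt_append_of_lt_of_not_prefix huv hpre v []
      rwa [List.append_nil] at this
  refine lyndon_of_suffix (by simp [hune]) ?_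
  intro a b hsplit hane hbne
  rcases lt_trichotomy a.length u.length with hlt | heq | hgt
  · have hau : a <+: u := by
      refine List.prefix_of_prefix_length_le ?_ (List.prefix_append u v) (le_of_lt hlt)
      rw [hsplit]; exact List.prefix_append a b
    obtain ⟨s, hs⟩ := hau
    have hsne : s ≠ [] := by
      rintro rfl
      rw [List.append_nil] at hs
      rw [hs] at hlt
      exact absurd hlt (lt_irrefl _)
    have hb : b = s ++ v := by
      apply List.append_cancel_left (as := a)
      rw [← hsplit, ← hs, List.append_assoc]
      
    have hus : u < s := lyndon_lt_suffix hu hs.symm hane hsne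
    have hnp : ¬ u <+: s := by
      intro hp
      have h1 := hp.length_le
      have h2 : s.length < u.length := by
        rw [← hs]
        simp [List.length_pos_iff.2 hane]
      omega
    have h5 := lt_append_of_lt_of_not_prefix hus hnp v v
    rw [hb]
    exact h5
  · have hau : a = u := by
      have h1 : a <+: u := by
        refine List.prefix_of_prefix_length_le ?_ (List.prefix_append u v) (le_of_eq heq)
        rw [hsplit]; exact List.prefix_append a b
      exact List.IsPrefix.eq_of_length h1 heq
    have hb : b = v := by
      have h2 : u ++ v = u ++ b := by rw [hsplit, hau]
      exact (List.append_cancel_left h2).symm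
    rw [hb]
    exact hstep
  · have hua : u <+: a := by
      refine List.prefix_of_prefix_length_le (List.prefix_append u v) ?_ (le_of_lt hgt)
      rw [hsplit]; exact List.prefix_append a b
    obtain ⟨p, hp⟩ := hua
    have hpne : p ≠ [] := by
      rintro rfl
      rw [List.append_nil] at hp
      rw [hp] at hgt
      exact absurd hgt (lt_irrefl _)
    have hvb : v = p ++ b := by
      apply List.append_cancel_left (as := u)
      rw [← List.append_assoc, hp, hsplit]
    have : v < b := lyndon_lt_suffix hv hvb hpne hbne
    exact hstep.trans this

theorem flatten_map_singleton (w : List α) : (w.map fun a => [a]).flatten = w := by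
  induction w with
  | nil => simp
  | cons a w ih => simp [ih]

theorem lyndon_singleton (a : α) : IsLyndon [a] := by
  refine ⟨by simp, ?_, ?_⟩
  · rintro ⟨v, r, hr, hvl, hflat⟩
    simp at hvl
    subst hvl
    simp at hflat
  · intro i hi
    simp at hi
    subst hi
    simp


/-- Merging step: any list of Lyndon factors can be turned into a nonincreasing one. -/
theorem exists_merge : ∀ n (L : List (List α)), L.length ≤ n → (∀ l ∈ L, IsLyndon l) →
    ∃ M : List (List α), (∀ l ∈ M, IsLyndon l) ∧ List.Chain' (fun a b => b ≤ a) M ∧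
      M.flatten = L.flatten ∧ M.length ≤ L.length
  | 0, L, hn, _ => by
      have : L = [] := List.eq_nil_of_length_eq_zero (Nat.le_zero.1 hn)
      subst this
      exact ⟨[], by simp, List.isChain_nil, rfl, le_rfl⟩
  | n + 1, L, hn, hly => by
      rcases L with _ | ⟨u, L'⟩
      · exact ⟨[], by simp, List.isChain_nil, rfl, le_rfl⟩
      have hL' : L'.length ≤ n := by
        simp only [List.length_cons] at hn
        omega
      obtain ⟨M', hM'ly, hM'ch, hM'fl, hM'len⟩ :=
        exists_merge n L' hL' (fun l hl => hly l (List.mem_cons_of_mem u hl))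
      rcases M' with _ | ⟨m, M''⟩
      · refine ⟨[u], ?_, List.isChain_singleton _, ?_, by simp⟩
        · intro l hl
          simp only [List.mem_singleton] at hl
          subst hl
          exact hly l (by simp)
        · simp only [List.flatten_cons, List.flatten_nil] at hM'fl ⊢
          rw [List.append_nil, ← hM'fl, List.append_nil]
      · by_cases hcmp : m ≤ u
        · refine ⟨u :: m :: M'', ?_, ?_, ?_, ?_⟩
          · intro l hl
            rcases List.mem_cons.1 hl with rfl | hl
            · exact hly l (by simp)
            · exact hM'ly l hl
          · exact List.IsChain.cons_cons hcmp hM'ch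
          · simp only [List.flatten_cons] at hM'fl ⊢
            rw [hM'fl]
          · simp only [List.length_cons] at hM'len ⊢
            omega
        · push_neg at hcmp
          have hum : IsLyndon (u ++ m) :=
            lyndon_append (hly u (by simp)) (hM'ly m (by simp)) hcmp
          have hlen2 : ((u ++ m) :: M'').length ≤ n := by
            simp only [List.length_cons] at hM'len ⊢
            omega
          obtain ⟨M, hMly, hMch, hMfl, hMlen⟩ := exists_merge n ((u ++ m) :: M'') hlen2
            (by
              intro l hl
              rcases List.mem_cons.1 hl with rfl | hl
              · exact hum
              · exact hM'ly l (List.mem_cons_of_mem m hl))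
          refine ⟨M, hMly, hMch, ?_, ?_⟩
          · rw [hMfl]
            simp only [List.flatten_cons, List.append_assoc] at hM'fl ⊢
            rw [hM'fl]
          · simp only [List.length_cons] at hMlen hM'len ⊢
            omega

/-- A nonempty prefix of a flatten starts... : there is a factor with a common piece. -/
theorem prefix_flatten : ∀ (F : List (List α)) (t : List α), (∀ f ∈ F, f ≠ []) → t ≠ [] →
    t <+: F.flatten → ∃ f ∈ F, ∃ s : List α, s ≠ [] ∧ s <:+ t ∧ s <+: f := by
  intro F
  induction F with
  | nil =>
      intro t _ ht hp
      simp only [List.flatten_nil, List.prefix_nil] at hp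
      exact absurd hp ht
  | cons f F' ih =>
      intro t hne ht hp
      rw [List.flatten_cons] at hp
      by_cases hlen : t.length ≤ f.length
      · have htf : t <+: f :=
          List.prefix_of_prefix_length_le hp (List.prefix_append f F'.flatten) hlen
        exact ⟨f, by simp, t, ht, List.suffix_refl t, htf⟩
      · push_neg at hlen
        have hft : f <+: t :=
          List.prefix_of_prefix_length_le (List.prefix_append f F'.flatten) hp (le_of_lt hlen)
        obtain ⟨t', rfl⟩ := hft
        have ht' : t' ≠ [] := by
          rintro rfl
          rw [List.append_nil] at hlen
          exact absurd hlen (lt_irrefl _)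
        have hp' : t' <+: F'.flatten := by
          obtain ⟨r, hr⟩ := hp
          rw [List.append_assoc] at hr
          exact ⟨r, List.append_cancel_left hr⟩
        obtain ⟨g, hg, s, hs1, hs2, hs3⟩ :=
          ih t' (fun x hx => hne x (List.mem_cons_of_mem f hx)) ht' hp'
        exact ⟨g, List.mem_cons_of_mem f hg, s, hs1, hs2.trans (List.suffix_append f t'), hs3⟩

/-- helper : in a chain, every later element is ≤ the head. -/
theorem chain_head_le {m : List α} {M : List (List α)}
    (h : List.Chain' (fun a b => b ≤ a) (m :: M)) : ∀ f ∈ M, f ≤ m := by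
  have htrans : IsTrans (List α) (fun a b : List α => b ≤ a) :=
    ⟨fun a b c hab hbc => le_trans hbc hab⟩
  have := List.isChain_iff_pairwise.1 h
  intro f hf
  exact (List.pairwise_cons.1 this).1 f hf

/-- The heads of two Lyndon factorizations of the same word agree. -/
theorem head_eq_aux {l m : List α} {L M : List (List α)}
    (hLly : ∀ x ∈ l :: L, IsLyndon x) (hMly : ∀ x ∈ m :: M, IsLyndon x)
    (hMch : List.Chain' (fun a b => b ≤ a) (m :: M))
    (hfl : l ++ L.flatten = m ++ M.flatten) (hlen : m.length ≤ l.length) : m = l := by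
  have hml : m <+: l := by
    have h1 : m <+: l ++ L.flatten := by rw [hfl]; exact List.prefix_append m M.flatten
    exact List.prefix_of_prefix_length_le h1 (List.prefix_append l L.flatten) hlen
  rcases eq_or_lt_of_le hlen with heq | hlt
  · exact List.IsPrefix.eq_of_length hml heq
  · exfalso
    obtain ⟨t, htl⟩ := hml
    have htne : t ≠ [] := by
      rintro rfl
      rw [List.append_nil] at htl
      rw [htl] at hlt
      exact absurd hlt (lt_irrefl _)
    have htM : t <+: M.flatten := by
      have h1 : m ++ (t ++ L.flatten) = m ++ M.flatten := by
        rw [← List.append_assoc, htl, hfl]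
      exact ⟨L.flatten, List.append_cancel_left h1⟩
    obtain ⟨g, hg, s, hs1, hs2, hs3⟩ := prefix_flatten M t
      (fun x hx => (hMly x (List.mem_cons_of_mem m hx)).1) htne htM
    -- s is a proper nonempty suffix of l
    obtain ⟨p, hp⟩ := hs2
    have hsl : l = (m ++ p) ++ s := by rw [List.append_assoc, hp, htl]
    have hmp : m ++ p ≠ [] := by simp [(hMly m (by simp)).1]
    have h1 : l < s := lyndon_lt_suffix (hLly l (by simp)) hsl hmp hs1
    have h2 : s ≤ g := prefix_le hs3
    have h3 : g ≤ m := chain_head_le hMch g hg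
    have h4 : m < l := by
      refine prefix_lt ⟨t, htl⟩ ?_
      intro h0
      rw [h0] at hlt
      exact absurd hlt (lt_irrefl _)
    exact absurd (((h1.trans_le h2).trans_le h3).trans h4) (lt_irrefl _)

theorem head_eq {l m : List α} {L M : List (List α)}
    (hLly : ∀ x ∈ l :: L, IsLyndon x) (hMly : ∀ x ∈ m :: M, IsLyndon x)
    (hLch : List.Chain' (fun a b => b ≤ a) (l :: L))
    (hMch : List.Chain' (fun a b => b ≤ a) (m :: M))
    (hfl : l ++ L.flatten = m ++ M.flatten) : l = m := by
  rcases le_total m.length l.length with h | h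
  · exact (head_eq_aux hLly hMly hMch hfl h).symm
  · exact head_eq_aux hMly hLly hLch hfl.symm h

/-- Uniqueness of Lyndon factorization. -/
theorem uniq : ∀ n (L M : List (List α)), L.flatten.length ≤ n →
    (∀ x ∈ L, IsLyndon x) → (∀ x ∈ M, IsLyndon x) →
    List.Chain' (fun a b => b ≤ a) L → List.Chain' (fun a b => b ≤ a) M →
    L.flatten = M.flatten → L = M
  | n, [], [], _, _, _, _, _, _ => rfl
  | n, [], m :: M, _, _, hMly, _, _, hfl => by
      exfalso
      simp only [List.flatten_nil, List.flatten_cons] at hfl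
      have := (hMly m (by simp)).1
      rcases List.append_eq_nil_iff.1 hfl.symm with ⟨h1, _⟩
      exact this h1
  | n, l :: L, [], _, hLly, _, _, _, hfl => by
      exfalso
      simp only [List.flatten_nil, List.flatten_cons] at hfl
      have := (hLly l (by simp)).1
      rcases List.append_eq_nil_iff.1 hfl with ⟨h1, _⟩
      exact this h1
  | 0, l :: L, m :: M, hn, hLly, _, _, _, _ => by
      exfalso
      simp only [List.flatten_cons, List.length_append] at hn
      have : l ≠ [] := (hLly l (by simp)).1
      have : 0 < l.length := List.length_pos_iff.2 this
      omega
  | n + 1, l :: L, m :: M, hn, hLly, hMly, hLch, hMch, hfl => by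
      simp only [List.flatten_cons] at hfl
      have hlm : l = m := head_eq hLly hMly hLch hMch hfl
      subst hlm
      have hfl' : L.flatten = M.flatten := List.append_cancel_left hfl
      have hn' : L.flatten.length ≤ n := by
        simp only [List.flatten_cons, List.length_append] at hn
        have : l ≠ [] := (hLly l (by simp)).1
        have : 0 < l.length := List.length_pos_iff.2 this
        omega
      have := uniq n L M hn' (fun x hx => hLly x (List.mem_cons_of_mem l hx))
        (fun x hx => hMly x (List.mem_cons_of_mem l hx)) hLch.tail hMch.tail hfl'
      rw [this]

end LyndonAux

/-- Theorem 2.1, Lyndon factorization: every nonempty word factors uniquely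
as a concatenation of a nonincreasing sequence of Lyndon words. -/
theorem lyndon_factorization {α : Type*} [LinearOrder α] (w : List α) (hw : w ≠ []) :
    ∃! L : List (List α),
      (∀ l ∈ L, IsLyndon l) ∧ List.Chain' (fun a b => b ≤ a) L ∧ L.flatten = w := by
  classical
  have hsing : ∀ l ∈ (w.map fun a => [a]), IsLyndon l := by
    intro l hl
    simp only [List.mem_map] at hl
    obtain ⟨a, _, rfl⟩ := hl
    exact LyndonAux.lyndon_singleton a
  obtain ⟨M, hMly, hMch, hMfl, _⟩ := LyndonAux.exists_merge (w.map fun a => [a]).length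
    (w.map fun a => [a]) le_rfl hsing
  have hflat : (w.map fun a => [a]).flatten = w := LyndonAux.flatten_map_singleton w
  refine ⟨M, ⟨hMly, hMch, by rw [hMfl, hflat]⟩, ?_⟩
  rintro N ⟨hNly, hNch, hNfl⟩
  exact LyndonAux.uniq w.length N M (by rw [hNfl]) hNly hMly hNch hMch
    (by rw [hNfl, hMfl, hflat])
end
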